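/- arXiv:2410.21204 — 2 statements merged into one kernel-verified Lean document; each statement's English description precedes it below -/
import Mathlib

section
/- For any nonnegative integer k and any point x in ℝ not belonging to a set A ⊆ ℝ that is locally finite and unbounded in both directions, the number of pairs (a, b) ∈ A × A with a < x < b such that the open interval (a, b) contains exactly k points of A is exactly k + 1. -/
private lemma finIoo' (A : Set ℝ) (hloc : ∀ a b : ℝ, (A ∩ Set.Icc a b).Finite)
    (a b : ℝ) : (A ∩ Set.Ioo a b).Finite :=
  (hloc a b).subset (Set.inter_subset_inter_right _ Set.Ioo_subset_Icc_self)

private lemma exists_max_below' (A : Set ℝ) (hloc : ∀ a b : ℝ, (A ∩ Set.Icc a b).Finite)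
    (y : ℝ) (h : ∃ a ∈ A, a < y) :
    ∃ m, m ∈ A ∧ m < y ∧ ∀ z ∈ A, z < y → z ≤ m := by
  obtain ⟨a, ha, hay⟩ := h
  have hfin : (A ∩ Set.Ico a y).Finite :=
    (hloc a y).subset (Set.inter_subset_inter_right _ Set.Ico_subset_Icc_self)
  have hne : (A ∩ Set.Ico a y).Nonempty := ⟨a, ha, le_refl a, hay⟩
  obtain ⟨m, hm, hmax⟩ := Set.exists_max_image _ id hfin hne
  refine ⟨m, hm.1, hm.2.2, ?_⟩
  intro z hz hzy
  by_cases hza : z < a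
  · exact hza.le.trans hm.2.1
  · exact hmax z ⟨hz, not_lt.1 hza, hzy⟩

private lemma exists_min_above' (A : Set ℝ) (hloc : ∀ a b : ℝ, (A ∩ Set.Icc a b).Finite)
    (y : ℝ) (h : ∃ a ∈ A, y < a) :
    ∃ m, m ∈ A ∧ y < m ∧ ∀ z ∈ A, y < z → m ≤ z := by
  obtain ⟨a, ha, hay⟩ := h
  have hfin : (A ∩ Set.Ioc y a).Finite :=
    (hloc y a).subset (Set.inter_subset_inter_right _ Set.Ioc_subset_Icc_self)
  have hne : (A ∩ Set.Ioc y a).Nonempty := ⟨a, ha, hay, le_refl a⟩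
  obtain ⟨m, hm, hmin⟩ := Set.exists_min_image _ id hfin hne
  refine ⟨m, hm.1, hm.2.1, ?_⟩
  intro z hz hyz
  by_cases hza : a < z
  · exact hm.2.2.trans hza.le
  · exact hmin z ⟨hz, hyz, not_lt.1 hza⟩

private lemma exists_c' (A : Set ℝ) (x : ℝ)
    (hloc : ∀ a b : ℝ, (A ∩ Set.Icc a b).Finite)
    (hdown : ∀ M : ℝ, ∃ a ∈ A, a < M) (hx : x ∉ A) :
    ∀ i : ℕ, ∃ a, a ∈ A ∧ a < x ∧ (A ∩ Set.Ioo a x).ncard = i := by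
  intro i
  induction i with
  | zero =>
    obtain ⟨m, hmA, hmx, hmax⟩ := exists_max_below' A hloc x (hdown x)
    refine ⟨m, hmA, hmx, ?_⟩
    have hset : A ∩ Set.Ioo m x = ∅ := by
      ext z
      simp only [Set.mem_inter_iff, Set.mem_Ioo, Set.mem_empty_iff_false, iff_false, not_and]
      intro hz hmz hzx
      exact absurd (hmax z hz hzx) (not_le.2 hmz)
    simp [hset]
  | succ i ih =>
    obtain ⟨a, haA, hax, hca⟩ := ih
    obtain ⟨m, hmA, hma, hmax⟩ := exists_max_below' A hloc a (hdown a)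
    refine ⟨m, hmA, hma.trans hax, ?_⟩
    have hset : A ∩ Set.Ioo m x = insert a (A ∩ Set.Ioo a x) := by
      ext z
      simp only [Set.mem_inter_iff, Set.mem_Ioo, Set.mem_insert_iff]
      constructor
      · rintro ⟨hz, hmz, hzx⟩
        rcases lt_trichotomy z a with h | h | h
        · exact absurd (hmax z hz h) (not_le.2 hmz)
        · exact Or.inl h
        · exact Or.inr ⟨hz, h, hzx⟩
      · rintro (rfl | ⟨hz, haz, hzx⟩)
        · exact ⟨haA, hma, hax⟩
        · exact ⟨hz, hma.trans haz, hzx⟩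
    rw [hset, Set.ncard_insert_of_notMem (fun h => lt_irrefl a h.2.1)
      (finIoo' A hloc a x), hca]

private lemma exists_d' (A : Set ℝ) (x : ℝ)
    (hloc : ∀ a b : ℝ, (A ∩ Set.Icc a b).Finite)
    (hup : ∀ M : ℝ, ∃ a ∈ A, M < a) (hx : x ∉ A) :
    ∀ j : ℕ, ∃ b, b ∈ A ∧ x < b ∧ (A ∩ Set.Ioo x b).ncard = j := by
  intro j
  induction j with
  | zero =>
    obtain ⟨m, hmA, hmx, hmin⟩ := exists_min_above' A hloc x (hup x)
    refine ⟨m, hmA, hmx, ?_⟩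
    have hset : A ∩ Set.Ioo x m = ∅ := by
      ext z
      simp only [Set.mem_inter_iff, Set.mem_Ioo, Set.mem_empty_iff_false, iff_false, not_and]
      intro hz hxz hzm
      exact absurd (hmin z hz hxz) (not_le.2 hzm)
    simp [hset]
  | succ j ih =>
    obtain ⟨b, hbA, hxb, hdb⟩ := ih
    obtain ⟨m, hmA, hbm, hmin⟩ := exists_min_above' A hloc b (hup b)
    refine ⟨m, hmA, hxb.trans hbm, ?_⟩
    have hset : A ∩ Set.Ioo x m = insert b (A ∩ Set.Ioo x b) := by
      ext z
      simp only [Set.mem_inter_iff, Set.mem_Ioo, Set.mem_insert_iff]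
      constructor
      · rintro ⟨hz, hxz, hzm⟩
        rcases lt_trichotomy z b with h | h | h
        · exact Or.inr ⟨hz, hxz, h⟩
        · exact Or.inl h
        · exact absurd (hmin z hz h) (not_le.2 hzm)
      · rintro (rfl | ⟨hz, hxz, hzb⟩)
        · exact ⟨hbA, hxb, hbm⟩
        · exact ⟨hz, hxz, hzb.trans hbm⟩
    rw [hset, Set.ncard_insert_of_notMem (fun h => lt_irrefl b h.2.2)
      (finIoo' A hloc x b), hdb]

private lemma c_strictAnti' (A : Set ℝ) (x : ℝ)
    (hloc : ∀ a b : ℝ, (A ∩ Set.Icc a b).Finite) :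
    ∀ a a', a ∈ A → a' ∈ A → a < a' → a' < x →
      (A ∩ Set.Ioo a' x).ncard < (A ∩ Set.Ioo a x).ncard := by
  intro a a' ha ha' haa' ha'x
  have hsub : insert a' (A ∩ Set.Ioo a' x) ⊆ A ∩ Set.Ioo a x := by
    rintro z (rfl | ⟨hz, h1, h2⟩)
    · exact ⟨ha', haa', ha'x⟩
    · exact ⟨hz, haa'.trans h1, h2⟩
  calc (A ∩ Set.Ioo a' x).ncard
      < (insert a' (A ∩ Set.Ioo a' x)).ncard := by
        rw [Set.ncard_insert_of_notMem (fun h => lt_irrefl a' h.2.1)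
          (finIoo' A hloc a' x)]; omega
    _ ≤ (A ∩ Set.Ioo a x).ncard := Set.ncard_le_ncard hsub (finIoo' A hloc a x)

private lemma d_strictMono' (A : Set ℝ) (x : ℝ)
    (hloc : ∀ a b : ℝ, (A ∩ Set.Icc a b).Finite) :
    ∀ b b', b ∈ A → b' ∈ A → b < b' → x < b →
      (A ∩ Set.Ioo x b).ncard < (A ∩ Set.Ioo x b').ncard := by
  intro b b' hb hb' hbb' hxb
  have hsub : insert b (A ∩ Set.Ioo x b) ⊆ A ∩ Set.Ioo x b' := by
    rintro z (rfl | ⟨hz, h1, h2⟩)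
    · exact ⟨hb, hxb, hbb'⟩
    · exact ⟨hz, h1, h2.trans hbb'⟩
  calc (A ∩ Set.Ioo x b).ncard
      < (insert b (A ∩ Set.Ioo x b)).ncard := by
        rw [Set.ncard_insert_of_notMem (fun h => lt_irrefl b h.2.2)
          (finIoo' A hloc x b)]; omega
    _ ≤ (A ∩ Set.Ioo x b').ncard := Set.ncard_le_ncard hsub (finIoo' A hloc x b')

/-- For a locally finite set `A ⊆ ℝ` unbounded above and below, and `x ∉ A`,
the number of pairs `(a, b) ∈ A × A` with `a < x < b` such that the open interval `(a, b)`
contains exactly `k` points of `A` is exactly `k + 1`. -/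
theorem stmt0 (A : Set ℝ) (k : ℕ) (x : ℝ)
    (hloc : ∀ a b : ℝ, (A ∩ Set.Icc a b).Finite)
    (hup : ∀ M : ℝ, ∃ a ∈ A, M < a)
    (hdown : ∀ M : ℝ, ∃ a ∈ A, a < M)
    (hx : x ∉ A) :
    {p : ℝ × ℝ | p.1 ∈ A ∧ p.2 ∈ A ∧ p.1 < x ∧ x < p.2 ∧
      (A ∩ Set.Ioo p.1 p.2).ncard = k}.ncard = k + 1 := by
  classical
  -- canonical point of each rank below x
  have hEc := exists_c' A x hloc hdown hx
  have hEd := exists_d' A x hloc hup hx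
  choose F hFA hFx hFc using hEc
  choose G hGA hGx hGd using hEd
  -- uniqueness of rank
  have hFu : ∀ i a, a ∈ A → a < x → (A ∩ Set.Ioo a x).ncard = i → a = F i := by
    intro i a ha hax hc
    rcases lt_trichotomy a (F i) with h | h | h
    · have := c_strictAnti' A x hloc a (F i) ha (hFA i) h (hFx i)
      rw [hc, hFc i] at this; omega
    · exact h
    · have := c_strictAnti' A x hloc (F i) a (hFA i) ha h hax
      rw [hc, hFc i] at this; omega
  have hGu : ∀ j b, b ∈ A → x < b → (A ∩ Set.Ioo x b).ncard = j → b = G j := by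
    intro j b hb hxb hd
    rcases lt_trichotomy b (G j) with h | h | h
    · have := d_strictMono' A x hloc b (G j) hb (hGA j) h hxb
      rw [hd, hGd j] at this; omega
    · exact h
    · have := d_strictMono' A x hloc (G j) b (hGA j) hb h (hGx j)
      rw [hd, hGd j] at this; omega
  -- splitting the count at x
  have hsplit : ∀ a b : ℝ, a < x → x < b →
      (A ∩ Set.Ioo a b).ncard = (A ∩ Set.Ioo a x).ncard + (A ∩ Set.Ioo x b).ncard := by
    intro a b hax hxb
    have hU : A ∩ Set.Ioo a b = (A ∩ Set.Ioo a x) ∪ (A ∩ Set.Ioo x b) := by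
      ext z
      simp only [Set.mem_inter_iff, Set.mem_Ioo, Set.mem_union]
      constructor
      · rintro ⟨hz, h1, h2⟩
        rcases lt_trichotomy z x with h | h | h
        · exact Or.inl ⟨hz, h1, h⟩
        · exact absurd (h ▸ hz) hx
        · exact Or.inr ⟨hz, h, h2⟩
      · rintro (⟨hz, h1, h2⟩ | ⟨hz, h1, h2⟩)
        · exact ⟨hz, h1, h2.trans hxb⟩
        · exact ⟨hz, hax.trans h1, h2⟩
    have hdisj : Disjoint (A ∩ Set.Ioo a x) (A ∩ Set.Ioo x b) := by
      rw [Set.disjoint_left]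
      rintro z ⟨_, _, h2⟩ ⟨_, h3, _⟩
      exact lt_irrefl z (h2.trans h3)
    rw [hU, Set.ncard_union_eq hdisj (finIoo' A hloc a x) (finIoo' A hloc x b)]
  -- the set is the image of {0,...,k}
  have hset : {p : ℝ × ℝ | p.1 ∈ A ∧ p.2 ∈ A ∧ p.1 < x ∧ x < p.2 ∧
      (A ∩ Set.Ioo p.1 p.2).ncard = k}
      = (fun i => (F i, G (k - i))) '' ↑(Finset.range (k + 1)) := by
    ext p
    simp only [Set.mem_setOf_eq, Set.mem_image, Finset.coe_range, Set.mem_Iio]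
    constructor
    · rintro ⟨h1, h2, h3, h4, h5⟩
      rw [hsplit p.1 p.2 h3 h4] at h5
      refine ⟨(A ∩ Set.Ioo p.1 x).ncard, by omega, ?_⟩
      have e1 : p.1 = F (A ∩ Set.Ioo p.1 x).ncard := hFu _ p.1 h1 h3 rfl
      have e2 : p.2 = G (k - (A ∩ Set.Ioo p.1 x).ncard) :=
        hGu _ p.2 h2 h4 (by omega)
      rw [← e1, ← e2]
    · rintro ⟨i, hik, rfl⟩
      refine ⟨hFA i, hGA _, hFx i, hGx _, ?_⟩
      rw [hsplit _ _ (hFx i) (hGx _), hFc, hGd]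
      omega
  rw [hset, Set.ncard_image_of_injOn, Set.ncard_coe_finset, Finset.card_range]
  intro i _ j _ hij
  have hF : F i = F j := congrArg Prod.fst hij
  have h := hFc i
  rw [hF, hFc j] at h
  omega
end

section
/- For any finite set A ⊆ ℝ^d and nonnegative integer k, the k-hull of A equals the intersection over all subsets B ⊆ A with |B| ≤ k of the convex hulls conv(A \ B). -/
/-!
A closed half-space is convex, so it contains `conv (A \ B)` as soon as it contains `A \ B`;
taking `B` to be the points of `A` it misses gives `⋂ conv (A \ B) ⊆ Hull_k(A)`. Conversely,
if `x ∉ conv (A \ B)`, the convex hull of the finite set `A \ B` is compact, so Hahn–Banach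
separates it from `x` by a half-space; that half-space misses only points of `B`, hence
at most `k` points of `A`, and so `x ∉ Hull_k(A)`.
-/

/-- The `k`-hull of `A ⊆ ℝ^d`: the intersection of all closed half-spaces that miss at
most `k` points of `A`. -/
noncomputable def kHull (d k : ℕ) (A : Set (EuclideanSpace ℝ (Fin d))) :
    Set (EuclideanSpace ℝ (Fin d)) :=
  ⋂₀ {H : Set (EuclideanSpace ℝ (Fin d)) |
      (∃ (u : EuclideanSpace ℝ (Fin d)) (c : ℝ), u ≠ 0 ∧
        H = {x : EuclideanSpace ℝ (Fin d) | (inner ℝ u x : ℝ) ≤ c}) ∧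
      (A \ H).ncard ≤ k}

open Set

section InnerHalfSpace

variable {E : Type*} [NormedAddCommGroup E] [InnerProductSpace ℝ E]

lemma convex_setOf_inner_le (u : E) (c : ℝ) : Convex ℝ {y : E | inner ℝ u y ≤ c} :=
  convex_halfSpace_le (innerₛₗ ℝ u).isLinear c

lemma exists_ne_zero_inner_le_lt_of_notMem_convexHull [CompleteSpace E] [Nontrivial E]
    {s : Set E} (hs : s.Finite) {x : E} (hx : x ∉ convexHull ℝ s) :
    ∃ u ≠ (0 : E), ∃ c : ℝ, s ⊆ {y | inner ℝ u y ≤ c} ∧ c < inner ℝ u x := by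
  rcases s.eq_empty_or_nonempty with rfl | ⟨a, ha⟩
  · obtain ⟨u, hu⟩ := exists_ne (0 : E)
    exact ⟨u, hu, inner ℝ u x - 1, empty_subset _, sub_one_lt _⟩
  obtain ⟨f, c, hfs, hfx⟩ := geometric_hahn_banach_closed_point (convex_convexHull ℝ s)
    (hs.isCompact_convexHull ℝ).isClosed hx
  set u := (InnerProductSpace.toDual ℝ E).symm f
  have hu : ∀ y, inner ℝ u y = f y := fun y => InnerProductSpace.toDual_symm_apply
  refine ⟨u, fun h0 => ?_, c, fun y hy => ?_, by rwa [hu]⟩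
  · have hfa := hfs a (subset_convexHull ℝ s ha)
    simp only [← hu, h0, inner_zero_left] at hfa hfx
    linarith
  · exact (hu y ▸ hfs y (subset_convexHull ℝ s hy)).le

end InnerHalfSpace

/-- The `k`-hull of a finite set `A` equals the intersection of the convex
hulls `conv(A \ B)` over all subsets `B ⊆ A` with `|B| ≤ k`. -/
theorem stmt13 (d : ℕ) (hd : 1 ≤ d) (A : Set (EuclideanSpace ℝ (Fin d))) (hA : A.Finite)
    (k : ℕ) :
    kHull d k A =
      ⋂ B ∈ {B : Set (EuclideanSpace ℝ (Fin d)) | B ⊆ A ∧ B.ncard ≤ k},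
        convexHull ℝ (A \ B) := by
  have : Nonempty (Fin d) := ⟨⟨0, hd⟩⟩
  ext x
  simp only [kHull, mem_sInter, mem_iInter, mem_ofPred_eq]
  constructor
  · rintro hx B ⟨hBA, hBk⟩
    by_contra hxB
    obtain ⟨u, hu, c, hAB, hc⟩ :=
      exists_ne_zero_inner_le_lt_of_notMem_convexHull (hA.sdiff (t := B)) hxB
    have hmiss : A \ {y | inner ℝ u y ≤ c} ⊆ B := fun a ⟨haA, haH⟩ =>
      by_contra fun haB => haH (hAB ⟨haA, haB⟩)
    exact (hx _ ⟨⟨u, c, hu, rfl⟩, (ncard_le_ncard hmiss (hA.subset hBA)).trans hBk⟩).not_gt hc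
  · rintro hx _ ⟨⟨u, c, -, rfl⟩, hk⟩
    refine (convex_setOf_inner_le u c).convexHull_subset_iff.2 ?_ (hx _ ⟨sdiff_subset, hk⟩)
    rw [sdiff_sdiff_right_self]
    exact inter_subset_right
end
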